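/- Let G : U → GL(n, ℝ) be smooth on an open set U ⊆ ℝ³. Then G satisfies G⁻¹ ∇² G = (G⁻¹ ∇G)² if and only if the pointwise inverse H = G⁻¹ satisfies H⁻¹ ∇² H = (H⁻¹ ∇H)² (equivalently, G ∇² G⁻¹ = (G ∇G⁻¹)²). -/

import Mathlib

open Matrix

/-- Entrywise partial derivative in coordinate direction `i` of a matrix-valued
function on `ℝ³`. -/
noncomputable def pd {ι : Type} [Fintype ι] [DecidableEq ι] (i : Fin 3)
    (M : (Fin 3 → ℝ) → Matrix ι ι ℝ) (p : Fin 3 → ℝ) : Matrix ι ι ℝ :=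
  Matrix.of fun a b => fderiv ℝ (fun q => M q a b) p (Pi.single i 1)

/-- The equation `G⁻¹ ∇²G = (G⁻¹ ∇G)²` at a point `p`. -/
noncomputable def matEq {ι : Type} [Fintype ι] [DecidableEq ι]
    (G : (Fin 3 → ℝ) → Matrix ι ι ℝ) (p : Fin 3 → ℝ) : Prop :=
  (G p)⁻¹ * (∑ i : Fin 3, pd i (pd i G) p) =
    ∑ i : Fin 3, ((G p)⁻¹ * pd i G p) * ((G p)⁻¹ * pd i G p)

/-- Smoothness of all entries of a matrix-valued function on a set. -/
def smoothOn {ι : Type} [Fintype ι] [DecidableEq ι]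
    (M : (Fin 3 → ℝ) → Matrix ι ι ℝ) (U : Set (Fin 3 → ℝ)) : Prop :=
  ∀ a b, ContDiffOn ℝ (⊤ : ℕ∞) (fun q => M q a b) U

section Aux

variable {n : ℕ} {U : Set (Fin 3 → ℝ)}

/-- Entrywise differentiability at a point. -/
def diffAt {ι : Type} [Fintype ι] [DecidableEq ι]
    (M : (Fin 3 → ℝ) → Matrix ι ι ℝ) (p : Fin 3 → ℝ) : Prop :=
  ∀ a b, DifferentiableAt ℝ (fun q => M q a b) p

lemma smoothOn.diffAt {M : (Fin 3 → ℝ) → Matrix (Fin n) (Fin n) ℝ}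
    (hM : smoothOn M U) (hU : IsOpen U) {p : Fin 3 → ℝ} (hp : p ∈ U) : diffAt M p := by
  intro a b
  exact ((hM a b).differentiableOn (by simp)).differentiableAt (hU.mem_nhds hp)

lemma pd_congr {ι : Type} [Fintype ι] [DecidableEq ι] {M N : (Fin 3 → ℝ) → Matrix ι ι ℝ}
    {p : Fin 3 → ℝ} (i : Fin 3) (h : M =ᶠ[nhds p] N) : pd i M p = pd i N p := by
  ext a b
  have h' : (fun q => M q a b) =ᶠ[nhds p] (fun q => N q a b) := by
    filter_upwards [h] with q hq; rw [hq]
  simp only [pd, Matrix.of_apply]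
  rw [h'.fderiv_eq]

lemma pd_const {ι : Type} [Fintype ι] [DecidableEq ι] (i : Fin 3) (C : Matrix ι ι ℝ)
    (p : Fin 3 → ℝ) : pd i (fun _ => C) p = 0 := by
  ext a b
  simp [pd]

lemma pd_neg {ι : Type} [Fintype ι] [DecidableEq ι] (i : Fin 3)
    (M : (Fin 3 → ℝ) → Matrix ι ι ℝ) (p : Fin 3 → ℝ) :
    pd i (fun q => -(M q)) p = -(pd i M p) := by
  ext a b
  simp only [pd, Matrix.of_apply, Matrix.neg_apply]
  rw [fderiv_fun_neg]
  simp

lemma diffAt_mul {ι : Type} [Fintype ι] [DecidableEq ι]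
    {A B : (Fin 3 → ℝ) → Matrix ι ι ℝ} {p : Fin 3 → ℝ}
    (hA : diffAt A p) (hB : diffAt B p) : diffAt (fun q => A q * B q) p := by
  intro a b
  have h1 : (fun q => (A q * B q) a b) = fun q => ∑ c, A q a c * B q c b := by
    funext q; simp [Matrix.mul_apply]
  rw [h1]
  exact DifferentiableAt.fun_sum fun c _ => (hA a c).mul (hB c b)

lemma pd_mul {ι : Type} [Fintype ι] [DecidableEq ι]
    {A B : (Fin 3 → ℝ) → Matrix ι ι ℝ} {p : Fin 3 → ℝ} (i : Fin 3)
    (hA : diffAt A p) (hB : diffAt B p) :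
    pd i (fun q => A q * B q) p = pd i A p * B p + A p * pd i B p := by
  ext a b
  simp only [pd, Matrix.of_apply, Matrix.add_apply, Matrix.mul_apply]
  rw [fderiv_fun_sum (fun c _ => (hA a c).fun_mul (hB c b))]
  rw [ContinuousLinearMap.sum_apply]
  rw [← Finset.sum_add_distrib]
  refine Finset.sum_congr rfl fun c _ => ?_
  rw [fderiv_fun_mul (hA a c) (hB c b)]
  simp only [ContinuousLinearMap.add_apply, ContinuousLinearMap.smul_apply, smul_eq_mul]
  ring

lemma pd_entry_contDiffOn {M : (Fin 3 → ℝ) → Matrix (Fin n) (Fin n) ℝ}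
    (hM : smoothOn M U) (hU : IsOpen U) (i : Fin 3) :
    smoothOn (fun q => pd i M q) U := by
  intro a b
  have h1 : ContDiffOn ℝ (⊤ : ℕ∞) (fun q => fderiv ℝ (fun r => M r a b) q) U :=
    (hM a b).fderiv_of_isOpen hU (by simp)
  have h2 := (ContinuousLinearMap.apply ℝ ℝ (Pi.single i (1:ℝ))).contDiff.comp_contDiffOn h1
  exact h2.congr fun q _ => rfl

lemma contDiffOn_det {f : (Fin 3 → ℝ) → Matrix (Fin n) (Fin n) ℝ}
    (hf : smoothOn f U) : ContDiffOn ℝ (⊤ : ℕ∞) (fun q => (f q).det) U := by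
  have h1 : (fun q => (f q).det) =
      fun q => ∑ σ : Equiv.Perm (Fin n), (Equiv.Perm.sign σ : ℝ) * ∏ c, f q (σ c) c := by
    funext q; rw [Matrix.det_apply']
  rw [h1]
  refine ContDiffOn.sum fun σ _ => ContDiffOn.mul contDiffOn_const ?_
  exact contDiffOn_prod fun c _ => hf (σ c) c

lemma smoothOn_inv {G : (Fin 3 → ℝ) → Matrix (Fin n) (Fin n) ℝ}
    (hG : smoothOn G U) (hGinv : ∀ p ∈ U, (G p).det ≠ 0) :
    smoothOn (fun q => (G q)⁻¹) U := by
  intro a b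
  have hdet : ContDiffOn ℝ (⊤ : ℕ∞) (fun q => (G q).det) U := contDiffOn_det hG
  have hdetinv : ContDiffOn ℝ (⊤ : ℕ∞) (fun q => ((G q).det)⁻¹) U := hdet.inv hGinv
  have hadj : ContDiffOn ℝ (⊤ : ℕ∞) (fun q => (G q).adjugate a b) U := by
    have h2 : (fun q => (G q).adjugate a b) =
        fun q => ((G q).updateRow b (Pi.single a 1)).det := by
      funext q; rw [Matrix.adjugate_apply]
    rw [h2]
    refine contDiffOn_det fun x y => ?_
    by_cases h : x = b
    · subst h; simp only [Matrix.updateRow_self]; exact contDiffOn_const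
    · simp only [Matrix.updateRow_ne h]; exact hG x y
  refine (hdetinv.mul hadj).congr fun q hq => ?_
  show (G q)⁻¹ a b = _
  rw [Matrix.inv_def]
  simp [Ring.inverse_eq_inv', Matrix.smul_apply, smul_eq_mul]

/-- `matEq` only depends on the local behaviour of the matrix function. -/
lemma matEq_congr {ι : Type} [Fintype ι] [DecidableEq ι]
    {M N : (Fin 3 → ℝ) → Matrix ι ι ℝ} {p : Fin 3 → ℝ}
    (h : M =ᶠ[nhds p] N) : matEq M p ↔ matEq N p := by
  have h0 : M p = N p := h.self_of_nhds
  have h1 : ∀ i : Fin 3, pd i M p = pd i N p := fun i => pd_congr i h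
  have h2 : ∀ i : Fin 3, pd i (pd i M) p = pd i (pd i N) p := by
    intro i
    refine pd_congr i ?_
    filter_upwards [h.eventually_nhds] with q hq
    exact pd_congr i hq
  unfold matEq
  rw [h0]
  simp only [h1, h2]

/-- Forward direction: if `G` satisfies the equation on `U`, so does its pointwise
inverse. -/
lemma matEq_inv_of {n : ℕ} {U : Set (Fin 3 → ℝ)} (hU : IsOpen U)
    (G : (Fin 3 → ℝ) → Matrix (Fin n) (Fin n) ℝ)
    (hG : smoothOn G U) (hGinv : ∀ p ∈ U, (G p).det ≠ 0)
    (hmG : ∀ p ∈ U, matEq G p) :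
    ∀ p ∈ U, matEq (fun q => (G q)⁻¹) p := by
  set H : (Fin 3 → ℝ) → Matrix (Fin n) (Fin n) ℝ := fun q => (G q)⁻¹ with hHdef
  have hHp : ∀ q, H q = (G q)⁻¹ := fun _ => rfl
  have hHsmooth : smoothOn H U := smoothOn_inv hG hGinv
  have hunit : ∀ p ∈ U, IsUnit (G p).det := fun p hp => Ne.isUnit (hGinv p hp)
  have hpdH : ∀ p ∈ U, ∀ i : Fin 3, pd i H p = -(H p * pd i G p * H p) := by
    intro p hp i
    have hGd : diffAt G p := hG.diffAt hU hp
    have hHd : diffAt H p := hHsmooth.diffAt hU hp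
    have hev : (fun q => G q * H q) =ᶠ[nhds p] (fun _ => (1 : Matrix (Fin n) (Fin n) ℝ)) := by
      filter_upwards [hU.mem_nhds hp] with q hq
      exact Matrix.mul_nonsing_inv _ (hunit q hq)
    have h0 : pd i G p * H p + G p * pd i H p = 0 := by
      rw [← pd_mul i hGd hHd, pd_congr i hev, pd_const]
    have h1 : G p * pd i H p = -(pd i G p * H p) :=
      eq_neg_of_add_eq_zero_right h0
    have h2 : H p * (G p * pd i H p) = H p * -(pd i G p * H p) := by rw [h1]
    rw [← mul_assoc, Matrix.nonsing_inv_mul _ (hunit p hp), one_mul, mul_neg, ← mul_assoc] at h2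
    exact h2
  have hpdH2 : ∀ p ∈ U, ∀ i : Fin 3,
      pd i (pd i H) p =
        H p * pd i G p * H p * pd i G p * H p
          + H p * pd i G p * H p * pd i G p * H p
          - H p * pd i (pd i G) p * H p := by
    intro p hp i
    have hGd : diffAt G p := hG.diffAt hU hp
    have hHd : diffAt H p := hHsmooth.diffAt hU hp
    have hpdGd : diffAt (fun q => pd i G q) p := (pd_entry_contDiffOn hG hU i).diffAt hU hp
    have hev : (fun q => pd i H q) =ᶠ[nhds p]
        (fun q => -(H q * pd i G q * H q)) := by
      filter_upwards [hU.mem_nhds hp] with q hq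
      exact hpdH q hq i
    have e1 : pd i (pd i H) p = pd i (fun q => -(H q * pd i G q * H q)) p := by
      refine pd_congr i ?_
      filter_upwards [hev] with q hq
      exact hq
    rw [e1]
    have e2 : pd i (fun q => -(H q * pd i G q * H q)) p
        = -(pd i (fun q => H q * pd i G q * H q) p) := pd_neg i _ p
    rw [e2]
    have e3 : pd i (fun q => H q * pd i G q * H q) p
        = pd i (fun q => H q * pd i G q) p * H p + (H p * pd i G p) * pd i H p :=
      pd_mul i (diffAt_mul hHd hpdGd) hHd
    have e4 : pd i (fun q => H q * pd i G q) p
        = pd i H p * pd i G p + H p * pd i (pd i G) p := pd_mul i hHd hpdGd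
    rw [e3, e4, hpdH p hp i]
    noncomm_ring
  -- now the algebra at each point
  intro p hp
  have hunitp := hunit p hp
  have hGH : G p * H p = 1 := Matrix.mul_nonsing_inv _ hunitp
  have hHG : H p * G p = 1 := Matrix.nonsing_inv_mul _ hunitp
  have hG2 : ∑ i : Fin 3, pd i (pd i G) p =
      ∑ i : Fin 3, pd i G p * H p * pd i G p := by
    have h := hmG p hp
    unfold matEq at h
    calc ∑ i : Fin 3, pd i (pd i G) p
        = G p * ((G p)⁻¹ * ∑ i : Fin 3, pd i (pd i G) p) := by
          rw [← mul_assoc, hGH, one_mul]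
      _ = G p * ∑ i : Fin 3, ((G p)⁻¹ * pd i G p) * ((G p)⁻¹ * pd i G p) := by rw [h]
      _ = ∑ i : Fin 3, pd i G p * H p * pd i G p := by
          rw [Finset.mul_sum]
          refine Finset.sum_congr rfl fun i _ => ?_
          rw [← hHp p]
          calc G p * (H p * pd i G p * (H p * pd i G p))
              = G p * H p * (pd i G p * H p * pd i G p) := by noncomm_ring
            _ = pd i G p * H p * pd i G p := by rw [hGH, one_mul]
  have hHinv : (H p)⁻¹ = G p := Matrix.nonsing_inv_nonsing_inv _ hunitp
  show (H p)⁻¹ * _ = _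
  calc (H p)⁻¹ * ∑ i : Fin 3, pd i (pd i H) p
      = ∑ i : Fin 3, G p * pd i (pd i H) p := by rw [hHinv, Finset.mul_sum]
    _ = ∑ i : Fin 3, (pd i G p * H p * pd i G p * H p
          + pd i G p * H p * pd i G p * H p - pd i (pd i G) p * H p) := by
        refine Finset.sum_congr rfl fun i _ => ?_
        rw [hpdH2 p hp i]
        calc G p * (H p * pd i G p * H p * pd i G p * H p
              + H p * pd i G p * H p * pd i G p * H p
              - H p * pd i (pd i G) p * H p)
            = G p * H p * (pd i G p * H p * pd i G p * H p)
              + G p * H p * (pd i G p * H p * pd i G p * H p)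
              - G p * H p * (pd i (pd i G) p * H p) := by noncomm_ring
          _ = _ := by rw [hGH]; noncomm_ring
    _ = ∑ i : Fin 3, pd i G p * H p * pd i G p * H p := by
        rw [Finset.sum_sub_distrib, Finset.sum_add_distrib]
        have : ∑ i : Fin 3, pd i (pd i G) p * H p
            = ∑ i : Fin 3, pd i G p * H p * pd i G p * H p := by
          rw [← Finset.sum_mul, hG2, Finset.sum_mul]
        rw [this]
        abel
    _ = ∑ i : Fin 3, ((H p)⁻¹ * pd i H p) * ((H p)⁻¹ * pd i H p) := by
        refine Finset.sum_congr rfl fun i _ => ?_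
        rw [hHinv, hpdH p hp i]
        calc pd i G p * H p * pd i G p * H p
            = (G p * H p) * (pd i G p * H p) * ((G p * H p) * (pd i G p * H p)) := by
              rw [hGH]; noncomm_ring
          _ = _ := by noncomm_ring

end Aux

/-- `G` satisfies `G⁻¹ ∇²G = (G⁻¹ ∇G)²` on `U` if and only if the pointwise inverse
`H = G⁻¹` satisfies the corresponding equation `H⁻¹ ∇²H = (H⁻¹ ∇H)²` on `U`. -/
theorem matEq_inv_iff {n : ℕ}
    (U : Set (Fin 3 → ℝ)) (hU : IsOpen U)
    (G : (Fin 3 → ℝ) → Matrix (Fin n) (Fin n) ℝ)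
    (hG : smoothOn G U) (hGinv : ∀ p ∈ U, (G p).det ≠ 0) :
    (∀ p ∈ U, matEq G p) ↔ (∀ p ∈ U, matEq (fun q => (G q)⁻¹) p) := by
  have hunit : ∀ p ∈ U, IsUnit (G p).det := fun p hp => Ne.isUnit (hGinv p hp)
  constructor
  · exact matEq_inv_of hU G hG hGinv
  · intro hmH p hp
    have hHsmooth : smoothOn (fun q => (G q)⁻¹) U := smoothOn_inv hG hGinv
    have hHdet : ∀ q ∈ U, ((G q)⁻¹).det ≠ 0 := by
      intro q hq
      rw [Matrix.det_nonsing_inv, Ring.inverse_eq_inv']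
      exact inv_ne_zero (hGinv q hq)
    have h2 := matEq_inv_of hU (fun q => (G q)⁻¹) hHsmooth hHdet hmH p hp
    have hev : (fun q => ((G q)⁻¹)⁻¹) =ᶠ[nhds p] G := by
      filter_upwards [hU.mem_nhds hp] with q hq
      exact Matrix.nonsing_inv_nonsing_inv _ (hunit q hq)
    exact (matEq_congr hev).mp h2
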